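/- arXiv:2208.04484 — 7 statements merged into one kernel-verified Lean document; each statement's English description precedes it below -/
import Mathlib

section
/- If C_in is a q-ary linear code of length n1, dimension k1, minimum distance d1 with locality r, and C_out is a linear code over F_{q^{k1}} of length n2, dimension k2, minimum distance d2, then the concatenated code (applying an F_q-linear isomorphism from F_{q^{k1}} to C_in to each coordinate of C_out) is a q-ary linear code of length n1*n2, dimension k1*k2, minimum distance at least d1*d2, and locality r. -/
/-!
The concatenation map is an injective `F`-linear map, so the dimension of the concatenated code
is `dim_F C_out = [K : F] · dim_K C_out = k₁ k₂`. The weight of a concatenated word is the sum of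
the inner weights of its blocks; each of the at least `d₂` nonzero outer symbols contributes a
nonzero inner codeword of weight at least `d₁`. A recovery set `R` of coordinate `i` of the inner
code gives the recovery set `{j} × R` of coordinate `(j, i)`, since each block is an inner codeword.
-/

open Finset

/-- `R` (containing `i`) is a recovery set at coordinate `i` for the code `C`. -/
def IsRecoverySet {F : Type*} [Field F] {ι : Type*} [Fintype ι]
    (C : Submodule F (ι → F)) (i : ι) (R : Finset ι) : Prop :=
  i ∈ R ∧ ∀ u ∈ C, ∀ v ∈ C, (∀ j ∈ R, j ≠ i → u j = v j) → u i = v i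

/-- `C` has locality `r`: every coordinate has a recovery set of size at most `r+1`. -/
def HasLocality {F : Type*} [Field F] {ι : Type*} [Fintype ι]
    (C : Submodule F (ι → F)) (r : ℕ) : Prop :=
  ∀ i : ι, ∃ R : Finset ι, R.card ≤ r + 1 ∧ IsRecoverySet C i R

/-- Every nonzero codeword of `C` has Hamming weight at least `d`. -/
def DistAtLeast {F : Type*} [Field F] [DecidableEq F] {ι : Type*} [Fintype ι]
    (C : Submodule F (ι → F)) (d : ℕ) : Prop :=
  ∀ c ∈ C, c ≠ 0 → d ≤ hammingNorm c

/-- `C` has minimum distance exactly `d`. -/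
def IsMinDist {F : Type*} [Field F] [DecidableEq F] {ι : Type*} [Fintype ι]
    (C : Submodule F (ι → F)) (d : ℕ) : Prop :=
  (∃ c ∈ C, c ≠ 0 ∧ hammingNorm c = d) ∧ DistAtLeast C d

/-- The concatenation map: apply the `F`-linear isomorphism `φ : K ≃ C_in` to each
coordinate of a word in `K^{n₂}`, producing a word indexed by `Fin n₂ × Fin n₁`. -/
def concatMap {n1 n2 : ℕ} {F K : Type*} [Field F] [Field K] [Algebra F K]
    (Cin : Submodule F (Fin n1 → F)) (φ : K ≃ₗ[F] Cin) :
    (Fin n2 → K) →ₗ[F] (Fin n2 × Fin n1 → F) where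
  toFun w := fun p => (φ (w p.1) : Fin n1 → F) p.2
  map_add' u v := by funext p; simp
  map_smul' a u := by funext p; simp

section Concatenation

variable {n1 n2 : ℕ} {F K : Type*} [Field F] [Field K] [Algebra F K]
  (Cin : Submodule F (Fin n1 → F)) (φ : K ≃ₗ[F] Cin)

theorem concatMap_injective : Function.Injective (concatMap (n2 := n2) Cin φ) := by
  refine (injective_iff_map_eq_zero _).mpr fun w hw => funext fun j => ?_
  have hblock : φ (w j) = 0 := Subtype.ext <| funext fun i => congrFun hw (j, i)
  simpa using hblock

theorem finrank_map_concatMap (Cout : Submodule K (Fin n2 → K)) :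
    Module.finrank F ((Cout.restrictScalars F).map (concatMap Cin φ)) =
      Module.finrank F Cin * Module.finrank K Cout := by
  rw [← (Submodule.equivMapOfInjective _ (concatMap_injective Cin φ) _).finrank_eq,
    ← φ.finrank_eq]
  exact (Module.finrank_mul_finrank F K Cout).symm

theorem hammingNorm_concatMap [DecidableEq F] (w : Fin n2 → K) :
    hammingNorm (concatMap Cin φ w) = ∑ j, hammingNorm (φ (w j) : Fin n1 → F) := by
  simp only [hammingNorm, card_filter]
  exact Fintype.sum_prod_type _

theorem distAtLeast_map_concatMap [DecidableEq F] [DecidableEq K] {d1 d2 : ℕ}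
    (Cout : Submodule K (Fin n2 → K)) (hd1 : DistAtLeast Cin d1) (hd2 : DistAtLeast Cout d2) :
    DistAtLeast ((Cout.restrictScalars F).map (concatMap Cin φ)) (d1 * d2) := by
  rintro _ ⟨w, hw, rfl⟩ hc0
  have hw0 : w ≠ 0 := by rintro rfl; simp at hc0
  have hblock : ∀ j, d1 * (if w j ≠ 0 then 1 else 0) ≤ hammingNorm (φ (w j) : Fin n1 → F) := by
    intro j
    by_cases hwj : w j = 0
    · simp [hwj]
    · simpa [hwj] using hd1 _ (φ (w j)).2 (by simpa using hwj)
  calc d1 * d2 ≤ d1 * hammingNorm w := Nat.mul_le_mul_left d1 (hd2 w hw hw0)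
    _ = ∑ j, d1 * (if w j ≠ 0 then 1 else 0) := by rw [← mul_sum, hammingNorm, card_filter]
    _ ≤ ∑ j, hammingNorm (φ (w j) : Fin n1 → F) := sum_le_sum fun j _ => hblock j
    _ = hammingNorm (concatMap Cin φ w) := (hammingNorm_concatMap Cin φ w).symm

theorem isRecoverySet_map_concatMap (Cout : Submodule K (Fin n2 → K)) {i : Fin n1}
    {R : Finset (Fin n1)} (hR : IsRecoverySet Cin i R) (j : Fin n2) :
    IsRecoverySet ((Cout.restrictScalars F).map (concatMap Cin φ)) (j, i) ({j} ×ˢ R) := by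
  refine ⟨mem_product.mpr ⟨mem_singleton_self j, hR.1⟩, ?_⟩
  rintro _ ⟨u, -, rfl⟩ _ ⟨v, -, rfl⟩ hagree
  refine hR.2 _ (φ (u j)).2 _ (φ (v j)).2 fun l hl hli => ?_
  exact hagree (j, l) (mem_product.mpr ⟨mem_singleton_self j, hl⟩) (by simp [hli])

theorem hasLocality_map_concatMap (Cout : Submodule K (Fin n2 → K)) {r : ℕ}
    (hloc : HasLocality Cin r) :
    HasLocality ((Cout.restrictScalars F).map (concatMap Cin φ)) r := by
  rintro ⟨j, i⟩
  obtain ⟨R, hRcard, hR⟩ := hloc i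
  exact ⟨{j} ×ˢ R, by simpa using hRcard, isRecoverySet_map_concatMap Cin φ Cout hR j⟩

end Concatenation

theorem concatenated_code_general {n1 n2 k1 k2 d1 d2 r : ℕ}
    {F : Type*} [Field F] [DecidableEq F]
    {K : Type*} [Field K] [DecidableEq K] [Algebra F K]
    (Cin : Submodule F (Fin n1 → F)) (Cout : Submodule K (Fin n2 → K))
    (hk1 : Module.finrank F Cin = k1) (hd1 : IsMinDist Cin d1) (hloc : HasLocality Cin r)
    (hk2 : Module.finrank K Cout = k2) (hd2 : IsMinDist Cout d2)
    (φ : K ≃ₗ[F] Cin) :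
    Fintype.card (Fin n2 × Fin n1) = n1 * n2 ∧
    Module.finrank F ((Cout.restrictScalars F).map (concatMap Cin φ)) = k1 * k2 ∧
    DistAtLeast ((Cout.restrictScalars F).map (concatMap Cin φ)) (d1 * d2) ∧
    HasLocality ((Cout.restrictScalars F).map (concatMap Cin φ)) r :=
  ⟨by simp [Nat.mul_comm], hk1 ▸ hk2 ▸ finrank_map_concatMap Cin φ Cout,
    distAtLeast_map_concatMap Cin φ Cout hd1.2 hd2.2, hasLocality_map_concatMap Cin φ Cout hloc⟩

/-- concatenating an `[n₁,k₁,d₁]_q` locally repairable code with locality `r`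
(inner code) with an `[n₂,k₂,d₂]_{q^{k₁}}` linear code (outer code) yields a `q`-ary linear
code of length `n₁n₂`, dimension `k₁k₂`, minimum distance at least `d₁d₂` and locality `r`. -/
theorem concatenated_code {q n1 n2 k1 k2 d1 d2 r : ℕ}
    {F : Type*} [Field F] [Fintype F] [DecidableEq F] (hq : Fintype.card F = q)
    {K : Type*} [Field K] [Fintype K] [DecidableEq K] [Algebra F K] (hK : Fintype.card K = q ^ k1)
    (Cin : Submodule F (Fin n1 → F)) (Cout : Submodule K (Fin n2 → K))
    (hk1 : Module.finrank F Cin = k1) (hd1 : IsMinDist Cin d1) (hloc : HasLocality Cin r)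
    (hk2 : Module.finrank K Cout = k2) (hd2 : IsMinDist Cout d2)
    (φ : K ≃ₗ[F] Cin) :
    Fintype.card (Fin n2 × Fin n1) = n1 * n2 ∧
    Module.finrank F ((Cout.restrictScalars F).map (concatMap Cin φ)) = k1 * k2 ∧
    DistAtLeast ((Cout.restrictScalars F).map (concatMap Cin φ)) (d1 * d2) ∧
    HasLocality ((Cout.restrictScalars F).map (concatMap Cin φ)) r :=
  concatenated_code_general Cin Cout hk1 hd1 hloc hk2 hd2 φ
end

section
/- If there exists a q-ary [n,k,d] linear code with locality r, then there exists a q-ary linear code of length n-1, dimension at least k-1, minimum distance at least d, and locality r, obtained by deleting from a parity-check matrix a column not belonging to a chosen set of d linearly dependent columns. -/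
/-!
Deleting column `i` of a parity-check matrix of `C` gives the parity-check matrix of the code
shortened at `i`: the codewords of `C` vanishing at `i`, with coordinate `i` removed. The
codewords vanishing at `i` form a subspace of codimension at most one, and removing a coordinate
on which they all vanish is injective, so the dimension drops by at most one; it also preserves
Hamming weights, so the distance does not drop; and a recovery set for a coordinate `j ≠ i` in
`C` still recovers `j` after removing `i`, since all shortened codewords agree (with value `0`)
at `i`.
-/

open Finset

open Module

theorem Submodule.finrank_le_finrank_inf_ker_add_one {K V : Type*} [Field K] [AddCommGroup V]
    [Module K V] [FiniteDimensional K V] (p : Submodule K V) (f : V →ₗ[K] K) :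
    finrank K p ≤ finrank K ↥(p ⊓ LinearMap.ker f) + 1 := by
  have hker : p ⊓ LinearMap.ker f = (LinearMap.ker (f ∘ₗ p.subtype)).map p.subtype := by
    rw [LinearMap.ker_comp, Submodule.map_comap_subtype]
  have hrange : finrank K (LinearMap.range (f ∘ₗ p.subtype)) ≤ 1 :=
    (Submodule.finrank_le _).trans (finrank_self K).le
  rw [hker, Submodule.finrank_map_subtype_eq, ← (f ∘ₗ p.subtype).finrank_range_add_finrank_ker]
  omega

theorem Submodule.finrank_map_of_disjoint_ker {K V W : Type*} [Field K] [AddCommGroup V]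
    [Module K V] [AddCommGroup W] [Module K W] {p : Submodule K V} {f : V →ₗ[K] W}
    (h : Disjoint p (LinearMap.ker f)) : finrank K ↥(p.map f) = finrank K p := by
  rw [← LinearMap.range_domRestrict]
  exact LinearMap.finrank_range_of_inj (LinearMap.injective_domRestrict_iff.mpr h)

section Shortening

variable {F : Type*} [Field F] {ι κ : Type*}

/-- The code `C` shortened at `i`, where `e` enumerates the coordinates other than `i`. -/
def shorten (C : Submodule F (ι → F)) (i : ι) (e : κ → ι) : Submodule F (κ → F) :=
  (C ⊓ LinearMap.ker (LinearMap.proj i)).map (LinearMap.funLeft F F e)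

theorem mem_shorten {C : Submodule F (ι → F)} {i : ι} {e : κ → ι} {c : κ → F} :
    c ∈ shorten C i e ↔ ∃ u ∈ C, u i = 0 ∧ u ∘ e = c := by
  simp only [shorten, Submodule.mem_map, Submodule.mem_inf, and_assoc]
  rfl

variable {i : ι} {e : κ → ι}

theorem finrank_le_finrank_shorten_add_one [Finite ι] (he : ∀ x, x ≠ i → x ∈ Set.range e)
    (C : Submodule F (ι → F)) : finrank F C ≤ finrank F (shorten C i e) + 1 := by
  have hdisj : Disjoint (C ⊓ LinearMap.ker (LinearMap.proj i))
      (LinearMap.ker (LinearMap.funLeft F F e)) := by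
    rw [Submodule.disjoint_def]
    intro u hu hue
    funext x
    by_cases hxi : x = i
    · exact hxi ▸ hu.2
    obtain ⟨t, rfl⟩ := he x hxi
    exact congrFun hue t
  rw [shorten, Submodule.finrank_map_of_disjoint_ker hdisj]
  exact C.finrank_le_finrank_inf_ker_add_one _

variable [Fintype ι] [Fintype κ]

theorem hammingNorm_le_hammingNorm_comp [DecidableEq F] (he : ∀ x, x ≠ i → x ∈ Set.range e)
    {u : ι → F} (hui : u i = 0) : hammingNorm u ≤ hammingNorm (u ∘ e) := by
  refine card_le_card_of_surjOn e fun x hx => ?_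
  simp only [coe_filter, mem_univ, true_and, Set.mem_ofPred_eq] at hx
  obtain ⟨t, rfl⟩ := he x (by rintro rfl; exact hx hui)
  exact ⟨t, by simpa using hx, rfl⟩

theorem DistAtLeast.shorten [DecidableEq F] (he : ∀ x, x ≠ i → x ∈ Set.range e)
    {C : Submodule F (ι → F)} {d : ℕ} (hC : DistAtLeast C d) :
    DistAtLeast (shorten C i e) d := by
  intro c hc hc0
  obtain ⟨u, hu, hui, rfl⟩ := mem_shorten.1 hc
  have hu0 : u ≠ 0 := by rintro rfl; exact hc0 rfl
  exact (hC u hu hu0).trans (hammingNorm_le_hammingNorm_comp he hui)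

theorem IsRecoverySet.shorten (he : ∀ x, x ≠ i → x ∈ Set.range e) (he' : Function.Injective e)
    {C : Submodule F (ι → F)} {j : κ} {R : Finset ι} (hR : IsRecoverySet C (e j) R) :
    IsRecoverySet (shorten C i e) j (R.preimage e he'.injOn) := by
  refine ⟨by simpa using hR.1, fun c hc c' hc' hagree => ?_⟩
  obtain ⟨u, hu, hui, rfl⟩ := mem_shorten.1 hc
  obtain ⟨v, hv, hvi, rfl⟩ := mem_shorten.1 hc'
  refine hR.2 u hu v hv fun x hxR hxj => ?_
  by_cases hxi : x = i
  · rw [hxi, hui, hvi]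
  obtain ⟨t, rfl⟩ := he x hxi
  exact hagree t (by simpa using hxR) fun htj => hxj (congrArg e htj)

theorem HasLocality.shorten (he : ∀ x, x ≠ i → x ∈ Set.range e) (he' : Function.Injective e)
    {C : Submodule F (ι → F)} {r : ℕ} (hC : HasLocality C r) :
    HasLocality (shorten C i e) r := by
  intro j
  obtain ⟨R, hcard, hR⟩ := hC (e j)
  have hcard' : (R.preimage e he'.injOn).card ≤ R.card :=
    card_le_card_of_injOn e (fun t ht => mem_preimage.1 ht) he'.injOn
  exact ⟨_, hcard'.trans hcard, hR.shorten he he'⟩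

end Shortening

theorem shorten_parity_check_general {n k d r : ℕ}
    {F : Type*} [Field F] [DecidableEq F]
    (C : Submodule F (Fin n → F))
    (hk : Module.finrank F C = k) (hd : IsMinDist C d) (hloc : HasLocality C r) :
    ∃ C' : Submodule F (Fin (n - 1) → F),
      k - 1 ≤ Module.finrank F C' ∧ DistAtLeast C' d ∧ HasLocality C' r := by
  cases n with
  -- `0 - 1 = 0` in `ℕ`, so `C` itself qualifies.
  | zero => exact ⟨C, hk ▸ Nat.sub_le _ _, hd.2, hloc⟩
  | succ m =>
    have hcov : ∀ x, x ≠ Fin.last m → x ∈ Set.range Fin.castSucc := fun x hx =>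
      (Fin.eq_castSucc_or_eq_last x).resolve_right hx |>.imp fun _ h => h.symm
    refine ⟨shorten C (Fin.last m) Fin.castSucc, ?_, hd.2.shorten hcov,
      hloc.shorten hcov (Fin.castSucc_injective m)⟩
    show k - 1 ≤ finrank F (shorten C (Fin.last m) Fin.castSucc : Submodule F (Fin m → F))
    have := finrank_le_finrank_shorten_add_one hcov C
    omega

/-- if there exists a `q`-ary `[n,k,d]` linear code with locality `r`, then there
exists a `q`-ary linear code of length `n-1`, dimension at least `k-1`, minimum distance at
least `d`, and locality `r` (delete a suitable column of a parity-check matrix). -/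
theorem shorten_parity_check {q n k d r : ℕ}
    {F : Type*} [Field F] [Fintype F] [DecidableEq F] (hq : Fintype.card F = q)
    (C : Submodule F (Fin n → F))
    (hk : Module.finrank F C = k) (hd : IsMinDist C d) (hloc : HasLocality C r) :
    ∃ C' : Submodule F (Fin (n - 1) → F),
      k - 1 ≤ Module.finrank F C' ∧ DistAtLeast C' d ∧ HasLocality C' r :=
  shorten_parity_check_general C hk hd hloc
end

section
/- Let H0 be an m x n matrix over F_q whose every set of d-1 columns is linearly independent. Partition the columns of H0 into ceil(n/r) consecutive blocks of size at most r, and form the matrix H by: (a) adding, for each block, one new row which is 1 on the columns of that block (and an appended extra column for that block) and 0 elsewhere, and (b) appending to each block one extra column whose new-row part is 1 on its own block row and whose H0-part is the zero vector. Then any d-1 columns of H are linearly independent; moreover, any d columns of H containing an appended extra column are linearly independent. -/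
open Finset

/-- The columns of `M` indexed by the finite set `T` are linearly independent. -/
def ColsLinearIndependent {F : Type*} [Field F] {ρ ι : Type*}
    (M : Matrix ρ ι F) (T : Finset ι) : Prop :=
  LinearIndependent F (fun j : T => fun i => M i (j : ι))

/-- The lengthened matrix `H` of Equation (5): columns of `H0` are grouped into `b` consecutive
blocks of size at most `r` (column `j` lies in block `j / r`); on top we add one indicator row
per block (equal to `1` on the columns of that block and on the appended extra column of that
block, `0` elsewhere), and for each block we append one extra column whose `H0`-part is zero. -/
def lengthenMatrix {F : Type*} [Field F] {m n : ℕ} (H0 : Matrix (Fin m) (Fin n) F)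
    (r b : ℕ) : Matrix (Fin b ⊕ Fin m) (Fin n ⊕ Fin b) F :=
  fun x y =>
    match x, y with
    | Sum.inl i, Sum.inl j => if (j : ℕ) / r = (i : ℕ) then 1 else 0
    | Sum.inl i, Sum.inr i' => if i = i' then 1 else 0
    | Sum.inr i, Sum.inl j => H0 i j
    | Sum.inr _, Sum.inr _ => 0

theorem lengthen_aux {F : Type*} [Field F] {m n r b d : ℕ}
    (H0 : Matrix (Fin m) (Fin n) F)
    (hH0 : ∀ S : Finset (Fin n), S.card ≤ d - 1 → ColsLinearIndependent H0 S)
    (T : Finset (Fin n ⊕ Fin b))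
    (hS : (T.preimage Sum.inl Sum.inl_injective.injOn).card ≤ d - 1) :
    ColsLinearIndependent (lengthenMatrix H0 r b) T := by
  classical
  set S := T.preimage Sum.inl Sum.inl_injective.injOn with hSdef
  have hLI := hH0 S hS
  rw [ColsLinearIndependent, Fintype.linearIndependent_iff]
  intro g hg
  set g' : (Fin n ⊕ Fin b) → F := fun y => if h : y ∈ T then g ⟨y, h⟩ else 0 with hg'def
  have hrow : ∀ x, (∑ y : Fin n ⊕ Fin b, g' y * lengthenMatrix H0 r b x y) = 0 := by
    intro x
    have h1 := congrFun hg x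
    simp only [Finset.sum_apply, Pi.smul_apply, smul_eq_mul, Pi.zero_apply] at h1
    calc ∑ y : Fin n ⊕ Fin b, g' y * lengthenMatrix H0 r b x y
        = ∑ y ∈ T, g' y * lengthenMatrix H0 r b x y :=
          (Finset.sum_subset (Finset.subset_univ T)
            (by intro y _ hy; simp [hg'def, hy])).symm
      _ = ∑ y ∈ T.attach, g' (y : Fin n ⊕ Fin b) * lengthenMatrix H0 r b x y :=
          (Finset.sum_attach T _).symm
      _ = ∑ y : {z // z ∈ T}, g y * lengthenMatrix H0 r b x y := by
          rw [← Finset.univ_eq_attach]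
          exact Finset.sum_congr rfl (by intro y _; simp [hg'def, y.2])
      _ = 0 := h1
  have hinl : ∀ j : Fin n, g' (Sum.inl j) = 0 := by
    have hnot : ∀ j : Fin n, j ∉ S → g' (Sum.inl j) = 0 := by
      intro j hj
      have : Sum.inl j ∉ T := fun h => hj (Finset.mem_preimage.mpr h)
      simp [hg'def, this]
    rw [ColsLinearIndependent, Fintype.linearIndependent_iff] at hLI
    have hsum : (∑ j : S, g' (Sum.inl (j : Fin n)) • (fun i => H0 i (j : Fin n)))
        = (0 : Fin m → F) := by
      funext i
      have h2 := hrow (Sum.inr i)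
      simp only [lengthenMatrix, Fintype.sum_sum_type, mul_zero, Finset.sum_const_zero,
        add_zero] at h2
      simp only [Finset.sum_apply, Pi.smul_apply, smul_eq_mul, Pi.zero_apply]
      calc ∑ j : {z // z ∈ S}, g' (Sum.inl (j : Fin n)) * H0 i (j : Fin n)
          = ∑ j ∈ S.attach, g' (Sum.inl (j : Fin n)) * H0 i (j : Fin n) := by
            rw [← Finset.univ_eq_attach]
        _ = ∑ j ∈ S, g' (Sum.inl j) * H0 i j := Finset.sum_attach S (fun j => g' (Sum.inl j) * H0 i j)
        _ = ∑ j : Fin n, g' (Sum.inl j) * H0 i j :=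
            Finset.sum_subset (Finset.subset_univ S)
              (by intro j _ hj; simp [hnot j hj])
        _ = 0 := h2
    intro j
    by_cases hj : j ∈ S
    · exact hLI _ hsum ⟨j, hj⟩
    · exact hnot j hj
  have hinr : ∀ i : Fin b, g' (Sum.inr i) = 0 := by
    intro i
    have h2 := hrow (Sum.inl i)
    simp only [lengthenMatrix, Fintype.sum_sum_type, hinl, zero_mul,
      Finset.sum_const_zero, zero_add, mul_ite, mul_one, mul_zero] at h2
    simpa using h2
  intro y
  have : g y = g' (y : Fin n ⊕ Fin b) := by simp [hg'def, y.2]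
  rw [this]
  rcases y with ⟨(j | i), hy⟩
  · exact hinl j
  · exact hinr i

/-- if every set of `d-1` columns of `H0` is linearly independent, then every set
of `d-1` columns of the lengthened matrix `H` is linearly independent; moreover any `d` columns
of `H` that include at least one appended extra column are linearly independent. -/
theorem lengthenMatrix_cols_linearIndependent {F : Type*} [Field F]
    {m n r b d : ℕ} (hr : 1 ≤ r) (hb : b = (n + r - 1) / r)
    (H0 : Matrix (Fin m) (Fin n) F)
    (hH0 : ∀ S : Finset (Fin n), S.card ≤ d - 1 → ColsLinearIndependent H0 S) :
    (∀ T : Finset (Fin n ⊕ Fin b), T.card = d - 1 →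
      ColsLinearIndependent (lengthenMatrix H0 r b) T) ∧
    (∀ T : Finset (Fin n ⊕ Fin b), T.card = d → (∃ i : Fin b, Sum.inr i ∈ T) →
      ColsLinearIndependent (lengthenMatrix H0 r b) T) := by
  constructor
  · intro T hT
    refine lengthen_aux H0 hH0 T ?_
    calc (T.preimage Sum.inl Sum.inl_injective.injOn).card
        ≤ T.card := Finset.card_le_card_of_injOn Sum.inl
          (fun j hj => Finset.mem_preimage.mp hj) Sum.inl_injective.injOn
      _ = d - 1 := hT
  · intro T hT ⟨i₀, hi₀⟩
    refine lengthen_aux H0 hH0 T ?_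
    have h1 : (T.preimage Sum.inl Sum.inl_injective.injOn).card
        ≤ (T.erase (Sum.inr i₀)).card := by
      refine Finset.card_le_card_of_injOn Sum.inl ?_ Sum.inl_injective.injOn
      intro j hj
      exact Finset.mem_erase.mpr ⟨by simp, Finset.mem_preimage.mp hj⟩
    rw [Finset.card_erase_of_mem hi₀, hT] at h1
    exact h1
end

section
/- Let C0 be an [n,k,d]_q linear code with parity-check matrix H0. Form H from H0 by splitting the columns into ceil(n/r) blocks of size at most r, adding one indicator row per block, and appending one extra column per block (equal to the block's indicator row vector with zero H0-part). Then the code C with parity-check matrix H is a q-ary linear code of length n + ceil(n/r), dimension exactly k, minimum distance at least d, and locality r. -/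
open Finset

/-!
A codeword of `C` is a codeword `u` of `C0` followed, for each block, by minus the sum of `u`
over that block. So `C` is the image of `C0` under an injective linear extension map, which
preserves the dimension and cannot lower weights. Each indicator row of `H` is a dual codeword of
weight at most `r + 1` supported on its block and extra column; on that support any coordinate is
minus the sum of the others, which gives locality `r`.
-/

section Hamming

theorem hammingNorm_comp_le_of_injective {ι κ β : Type*} [Fintype ι] [Fintype κ] [Zero β]
    [DecidableEq β] (x : κ → β) {e : ι → κ} (he : Function.Injective e) :
    hammingNorm (x ∘ e) ≤ hammingNorm x :=
  card_le_card_of_injOn e (fun i hi => by simpa using hi) he.injOn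

theorem DistAtLeast.map {F : Type*} [Field F] [DecidableEq F] {ι κ : Type*} [Fintype ι]
    [Fintype κ] {C : Submodule F (ι → F)} {d : ℕ} (hC : DistAtLeast C d)
    (f : (ι → F) →ₗ[F] κ → F) (hf : ∀ x, hammingNorm x ≤ hammingNorm (f x)) :
    DistAtLeast (C.map f) d := by
  rintro _ ⟨x, hx, rfl⟩ hfx
  have hx0 : x ≠ 0 := by rintro rfl; exact hfx (map_zero f)
  exact (hC x hx hx0).trans (hf x)

end Hamming

section Locality

variable {F : Type*} [Field F] {ι : Type*} [Fintype ι] {C : Submodule F (ι → F)}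

theorem isRecoverySet_of_forall_sum_eq_zero [DecidableEq ι] {R : Finset ι}
    (hR : ∀ c ∈ C, ∑ j ∈ R, c j = 0) {i : ι} (hi : i ∈ R) : IsRecoverySet C i R := by
  refine ⟨hi, fun u hu v hv huv => ?_⟩
  have hrest : ∑ j ∈ R.erase i, u j = ∑ j ∈ R.erase i, v j :=
    sum_congr rfl fun j hj => huv j (mem_of_mem_erase hj) (ne_of_mem_erase hj)
  have hsum : u i + ∑ j ∈ R.erase i, u j = v i + ∑ j ∈ R.erase i, v j := by
    rw [add_sum_erase R u hi, add_sum_erase R v hi, hR u hu, hR v hv]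
  rw [hrest] at hsum
  exact add_right_cancel hsum

theorem hasLocality_of_forall_sum_eq_zero {κ : Type*} (R : κ → Finset ι) {r : ℕ}
    (hcard : ∀ t, (R t).card ≤ r + 1) (hcover : ∀ i, ∃ t, i ∈ R t)
    (hsum : ∀ t, ∀ c ∈ C, ∑ j ∈ R t, c j = 0) : HasLocality C r := by
  classical
  intro i
  obtain ⟨t, hi⟩ := hcover i
  exact ⟨R t, hcard t, isRecoverySet_of_forall_sum_eq_zero (hsum t) hi⟩

end Locality

section Lengthening

def colBlock (n r t : ℕ) : Finset (Fin n) :=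
  {j | (j : ℕ) / r = t}

theorem card_colBlock_le {n r : ℕ} (hr : 0 < r) (t : ℕ) : (colBlock n r t).card ≤ r := by
  have hmaps :
      Set.MapsTo (fun j : Fin n => (j : ℕ)) (colBlock n r t) (Ico (t * r) (t * r + r)) := by
    intro j hj
    simp only [colBlock, coe_filter, mem_univ, true_and, Set.mem_ofPred_eq] at hj
    subst hj
    exact mem_Ico.2 ⟨Nat.div_mul_le_self _ _, Nat.lt_div_mul_add hr⟩
  simpa using card_le_card_of_injOn _ hmaps Fin.val_injective.injOn

/-- The support of the indicator row of block `i` of `H`. -/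
def localGroup (n r : ℕ) {b : ℕ} (i : Fin b) : Finset (Fin n ⊕ Fin b) :=
  (colBlock n r i).disjSum {i}

theorem card_localGroup_le {n r b : ℕ} (hr : 0 < r) (i : Fin b) :
    (localGroup n r i).card ≤ r + 1 := by
  simpa [localGroup, card_disjSum] using card_colBlock_le hr (n := n) i

theorem exists_mem_localGroup {n r b : ℕ} (hr : 0 < r) (hb : b = (n + r - 1) / r)
    (y : Fin n ⊕ Fin b) : ∃ i : Fin b, y ∈ localGroup n r i := by
  rcases y with j | i
  · have hj : (j : ℕ) / r < b := by
      rw [hb, Nat.lt_iff_add_one_le, ← Nat.add_div_right _ hr]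
      exact Nat.div_le_div_right (by omega)
    exact ⟨⟨_, hj⟩, by simp [localGroup, colBlock]⟩
  · exact ⟨i, by simp [localGroup]⟩

open Matrix

variable {F : Type*} [Field F] {m n : ℕ}

theorem mulVec_lengthenMatrix_inl (H0 : Matrix (Fin m) (Fin n) F) (r : ℕ) {b : ℕ}
    (c : Fin n ⊕ Fin b → F) (i : Fin b) :
    (lengthenMatrix H0 r b *ᵥ c) (Sum.inl i) = ∑ y ∈ localGroup n r i, c y := by
  simp [Matrix.mulVec, dotProduct, lengthenMatrix, localGroup, colBlock, sum_disjSum,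
    Fintype.sum_sum_type, sum_filter, eq_comm]

theorem mulVec_lengthenMatrix_inr (H0 : Matrix (Fin m) (Fin n) F) (r : ℕ) {b : ℕ}
    (c : Fin n ⊕ Fin b → F) (x : Fin m) :
    (lengthenMatrix H0 r b *ᵥ c) (Sum.inr x) = (H0 *ᵥ (c ∘ Sum.inl)) x := by
  simp [Matrix.mulVec, dotProduct, lengthenMatrix, Fintype.sum_sum_type]

theorem mem_ker_lengthenMatrix_iff (H0 : Matrix (Fin m) (Fin n) F) (r : ℕ) {b : ℕ}
    (c : Fin n ⊕ Fin b → F) :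
    c ∈ LinearMap.ker (lengthenMatrix H0 r b).mulVecLin ↔
      c ∘ Sum.inl ∈ LinearMap.ker H0.mulVecLin ∧
        ∀ i, ∑ y ∈ localGroup n r i, c y = 0 := by
  simp only [LinearMap.mem_ker, Matrix.mulVecLin_apply, funext_iff, Sum.forall,
    mulVec_lengthenMatrix_inl, mulVec_lengthenMatrix_inr, Pi.zero_apply]
  exact and_comm

def lengthenMap (n r b : ℕ) : (Fin n → F) →ₗ[F] (Fin n ⊕ Fin b → F) where
  toFun u := Sum.elim u fun i => -∑ j ∈ colBlock n r i, u j
  map_add' u v := by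
    ext (j | i) <;> simp [sum_add_distrib, add_comm]
  map_smul' a u := by
    ext (j | i) <;> simp [mul_sum]

theorem ker_lengthenMatrix_eq_map (H0 : Matrix (Fin m) (Fin n) F) (r b : ℕ) :
    LinearMap.ker (lengthenMatrix H0 r b).mulVecLin =
      (LinearMap.ker H0.mulVecLin).map (lengthenMap n r b) := by
  ext c
  rw [mem_ker_lengthenMatrix_iff, Submodule.mem_map]
  constructor
  · rintro ⟨hc, hsum⟩
    refine ⟨c ∘ Sum.inl, hc, ?_⟩
    ext (j | i)
    · rfl
    · have := hsum i
      simp only [localGroup, sum_disjSum, sum_singleton] at this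
      simp [lengthenMap, eq_neg_of_add_eq_zero_right this]
  · rintro ⟨u, hu, rfl⟩
    refine ⟨hu, fun i => ?_⟩
    simp [lengthenMap, localGroup, sum_disjSum]

theorem finrank_ker_lengthenMatrix (H0 : Matrix (Fin m) (Fin n) F) (r b : ℕ) :
    Module.finrank F (LinearMap.ker (lengthenMatrix H0 r b).mulVecLin) =
      Module.finrank F (LinearMap.ker H0.mulVecLin) := by
  have hinj : Function.Injective (lengthenMap (F := F) n r b) := fun u v huv =>
    funext fun j => congrFun huv (Sum.inl j)
  rw [ker_lengthenMatrix_eq_map]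
  exact (Submodule.equivMapOfInjective _ hinj _).finrank_eq.symm

theorem hammingNorm_le_hammingNorm_lengthenMap [DecidableEq F] (r b : ℕ) (u : Fin n → F) :
    hammingNorm u ≤ hammingNorm (lengthenMap n r b u) :=
  hammingNorm_comp_le_of_injective (lengthenMap n r b u) Sum.inl_injective

end Lengthening

theorem lengthened_code_params_general {n k d r b p : ℕ}
    {F : Type*} [Field F] [DecidableEq F]
    (hr : 1 ≤ r) (hb : b = (n + r - 1) / r)
    (H0 : Matrix (Fin p) (Fin n) F)
    (hk : Module.finrank F (LinearMap.ker H0.mulVecLin) = k)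
    (hd : IsMinDist (LinearMap.ker H0.mulVecLin) d) :
    Module.finrank F (LinearMap.ker (lengthenMatrix H0 r b).mulVecLin) = k ∧
    DistAtLeast (LinearMap.ker (lengthenMatrix H0 r b).mulVecLin) d ∧
    HasLocality (LinearMap.ker (lengthenMatrix H0 r b).mulVecLin) r := by
  refine ⟨(finrank_ker_lengthenMatrix H0 r b).trans hk, ?_, ?_⟩
  · rw [ker_lengthenMatrix_eq_map]
    exact hd.2.map _ (hammingNorm_le_hammingNorm_lengthenMap r b)
  · exact hasLocality_of_forall_sum_eq_zero (localGroup n r) (card_localGroup_le hr)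
      (exists_mem_localGroup hr hb)
      fun i c hc => ((mem_ker_lengthenMatrix_iff H0 r c).1 hc).2 i

/-- let `C0` be an `[n,k,d]_q` linear code with parity-check matrix `H0`, and let
`H` be the lengthened matrix obtained by splitting the columns of `H0` into `⌈n/r⌉` blocks of
size at most `r`, adding one indicator row per block and appending one extra column per block.
Then the code `C` with parity-check matrix `H` is a `q`-ary linear code of length `n + ⌈n/r⌉`,
dimension exactly `k`, minimum distance at least `d`, and locality `r`. -/
theorem lengthened_code_params {q n k d r b p : ℕ}
    {F : Type*} [Field F] [Fintype F] [DecidableEq F] (hq : Fintype.card F = q)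
    (hr : 1 ≤ r) (hb : b = (n + r - 1) / r)
    (H0 : Matrix (Fin p) (Fin n) F)
    (hk : Module.finrank F (LinearMap.ker H0.mulVecLin) = k)
    (hd : IsMinDist (LinearMap.ker H0.mulVecLin) d) :
    Module.finrank F (LinearMap.ker (lengthenMatrix H0 r b).mulVecLin) = k ∧
    DistAtLeast (LinearMap.ker (lengthenMatrix H0 r b).mulVecLin) d ∧
    HasLocality (LinearMap.ker (lengthenMatrix H0 r b).mulVecLin) r :=
  lengthened_code_params_general hr hb H0 hk hd
end

section
/- Let alpha_{ij} be pairwise distinct nonzero elements of F_q indexed by blocks (i from 1 to m+1, j ranging over block i of size at most r, with n total columns, n <= q-1). Let h_{ij} = (alpha_{ij}, alpha_{ij}^2, ..., alpha_{ij}^{d-1})^T. Form the matrix H with ceil(n/r) block-indicator rows on top (each block augmented by one extra column with 1 in its indicator row and zero Vandermonde part) and the Vandermonde columns h_{ij} below. Then any d columns of H are linearly independent. -/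
/-!
Take a vanishing combination of the chosen columns, with coefficients `c j` on the columns
`Sum.inl j` and `e i` on the appended columns. The Vandermonde rows say
`∑ j, c j * α j ^ t = 0` for `1 ≤ t ≤ d - 1`. If an appended column is chosen, at most `d - 1`
of the `c j` are nonzero, so the Vandermonde system for the `c j * α j` kills them (`α j ≠ 0`),
and then each indicator row gives `e i = 0`. Otherwise all `e i` vanish, so the indicator rows
make every block sum of `c` zero; adding them up gives the missing equation `∑ j, c j = 0`,
completing a `d × d` Vandermonde system for at most `d` nonzero `c j`.
-/

open Finset

open Matrix

theorem eq_zero_of_forall_sum_mul_pow_eq_zero {R ι : Type*} [CommRing R] [IsDomain R]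
    [Fintype ι] {α : ι → R} (hα : Function.Injective α) {c : ι → R} {S : Finset ι} {k : ℕ}
    (hc : ∀ j ∉ S, c j = 0) (hk : #S ≤ k) (h : ∀ t < k, ∑ j, c j * α j ^ t = 0) : c = 0 := by
  let e := S.equivFin
  have hsum (f : ι → R) (hf : ∀ j ∉ S, f j = 0) : ∑ j, f j = ∑ i, f (e.symm i) := by
    rw [e.symm.sum_comp (fun x : S => f x), sum_coe_sort,
      sum_subset (subset_univ S) fun j _ hj => hf j hj]
  have hv : (fun i => c (e.symm i)) = 0 := by
    refine eq_zero_of_forall_pow_sum_mul_pow_eq_zero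
      (f := fun i => α (e.symm i)) (hα.comp (Subtype.val_injective.comp e.symm.injective))
      fun t => ?_
    rw [← h t (t.isLt.trans_le hk), hsum _ fun j hj => by rw [hc j hj, zero_mul]]
  funext j
  by_cases hj : j ∈ S
  · simpa [e] using congrFun hv (e ⟨j, hj⟩)
  · exact hc j hj

theorem eq_zero_of_forall_sum_mul_pow_succ_eq_zero {R ι : Type*} [CommRing R] [IsDomain R]
    [Fintype ι] {α : ι → R} (hα : Function.Injective α) (hα0 : ∀ j, α j ≠ 0) {c : ι → R}
    {S : Finset ι} {k : ℕ} (hc : ∀ j ∉ S, c j = 0) (hk : #S ≤ k)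
    (h : ∀ t < k, ∑ j, c j * α j ^ (t + 1) = 0) : c = 0 := by
  have hcα : (fun j => c j * α j) = 0 :=
    eq_zero_of_forall_sum_mul_pow_eq_zero hα (fun j hj => by rw [hc j hj, zero_mul]) hk
      fun t ht => by simpa only [pow_succ', mul_assoc] using h t ht
  funext j
  exact (mul_eq_zero.mp (congrFun hcα j)).resolve_right (hα0 j)

theorem eq_zero_of_sum_eq_zero_of_forall_sum_mul_pow_succ_eq_zero {R ι : Type*} [CommRing R]
    [IsDomain R] [Fintype ι] {α : ι → R} (hα : Function.Injective α) {c : ι → R}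
    {S : Finset ι} {k : ℕ} (hc : ∀ j ∉ S, c j = 0) (hk : #S ≤ k + 1) (h₀ : ∑ j, c j = 0)
    (h : ∀ t < k, ∑ j, c j * α j ^ (t + 1) = 0) : c = 0 := by
  refine eq_zero_of_forall_sum_mul_pow_eq_zero hα hc hk fun t ht => ?_
  cases t with
  | zero => simpa using h₀
  | succ t => exact h t (Nat.succ_lt_succ_iff.mp ht)

theorem div_lt_add_sub_one_div {j n r : ℕ} (hr : 0 < r) (hj : j < n) :
    j / r < (n + r - 1) / r := by
  rw [Nat.lt_iff_add_one_le, Nat.le_div_iff_mul_le hr, add_mul, one_mul]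
  have := Nat.div_mul_le_self j r
  omega

theorem sum_eq_sum_sum_div_eq {M : Type*} [AddCommMonoid M] {n r : ℕ} (hr : 0 < r)
    (c : Fin n → M) :
    ∑ j, c j = ∑ i : Fin ((n + r - 1) / r), ∑ j : Fin n with j.val / r = i, c j := by
  rw [← sum_fiberwise_of_maps_to (s := univ) (t := univ)
    (g := fun j : Fin n => (⟨j / r, div_lt_add_sub_one_div hr j.isLt⟩ : Fin ((n + r - 1) / r)))
    (fun _ _ => mem_univ _)]
  simp [Fin.ext_iff]

theorem colsLinearIndependent_of_mulVec {F ρ ι : Type*} [Field F] [Fintype ι]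
    {M : Matrix ρ ι F} {T : Finset ι}
    (h : ∀ g : ι → F, (∀ j ∉ T, g j = 0) → M *ᵥ g = 0 → ∀ j ∈ T, g j = 0) :
    ColsLinearIndependent M T := by
  classical
  change LinearIndepOn F (fun j i => M i j) (T : Set ι)
  rw [linearIndepOn_finset_iff]
  intro f hf j hj
  have := h (T.piecewise f 0) (fun j hj => T.piecewise_eq_of_notMem _ _ hj) ?_ j hj
  · simpa [hj] using this
  funext i
  simpa [mulVec, dotProduct, piecewise, mul_comm] using congrFun hf i

section lengthenMatrix

variable {F : Type*} [Field F] {m n : ℕ} (H0 : Matrix (Fin m) (Fin n) F) (r b : ℕ)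
  (g : Fin n ⊕ Fin b → F)

theorem lengthenMatrix_mulVec_inl (i : Fin b) :
    (lengthenMatrix H0 r b *ᵥ g) (.inl i) =
      ∑ j : Fin n with j.val / r = i, g (.inl j) + g (.inr i) := by
  simp [mulVec, dotProduct, lengthenMatrix, sum_filter]

theorem lengthenMatrix_mulVec_inr (t : Fin m) :
    (lengthenMatrix H0 r b *ᵥ g) (.inr t) = (H0 *ᵥ (g ∘ .inl)) t := by
  simp [mulVec, dotProduct, lengthenMatrix]

end lengthenMatrix

theorem vandermonde_lengthened_cols_linearIndependent_general {n r b d : ℕ}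
    {F : Type*} [Field F] (hr : 1 ≤ r)
    (hb : b = (n + r - 1) / r)
    (α : Fin n → F) (hinj : Function.Injective α) (hne : ∀ j, α j ≠ 0) :
    ∀ T : Finset (Fin n ⊕ Fin b), T.card = d →
      ColsLinearIndependent
        (lengthenMatrix (fun (t : Fin (d - 1)) (j : Fin n) => α j ^ ((t : ℕ) + 1)) r b) T := by
  subst hb
  intro T hT
  set V : Matrix (Fin (d - 1)) (Fin n) F := fun t j => α j ^ ((t : ℕ) + 1)
  refine colsLinearIndependent_of_mulVec fun g hgT hg => ?_
  have hc : ∀ j ∉ T.toLeft, g (.inl j) = 0 := fun j hj => hgT _ (mem_toLeft.not.mp hj)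
  have hpow : ∀ t < d - 1, ∑ j, g (.inl j) * α j ^ (t + 1) = 0 := fun t ht => by
    have := congrFun hg (.inr ⟨t, ht⟩)
    rw [lengthenMatrix_mulVec_inr] at this
    simpa [V, mulVec, dotProduct, mul_comm] using this
  have hblock (i : Fin _) : ∑ j : Fin n with j.val / r = i, g (.inl j) + g (.inr i) = 0 := by
    rw [← lengthenMatrix_mulVec_inl V, hg, Pi.zero_apply]
  have hcard := card_toLeft_add_card_toRight (u := T)
  have hgl : (fun j => g (.inl j)) = 0 := by
    rcases T.toRight.eq_empty_or_nonempty with hE | ⟨i, hi⟩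
    · have hgr (i) : g (.inr i) = 0 := hgT _ fun hmem => by simp [← mem_toRight, hE] at hmem
      refine eq_zero_of_sum_eq_zero_of_forall_sum_mul_pow_succ_eq_zero hinj hc
        (k := d - 1) (by omega) ?_ hpow
      rw [sum_eq_sum_sum_div_eq hr]
      exact sum_eq_zero fun i _ => by simpa [hgr] using hblock i
    · exact eq_zero_of_forall_sum_mul_pow_succ_eq_zero hinj hne hc
        (by have := card_pos.mpr ⟨i, hi⟩; omega) hpow
  rintro (j | i) _
  · exact congrFun hgl j
  · simpa [funext_iff.mp hgl] using hblock i

/-- let `α_{ij}` be `n` pairwise distinct nonzero elements of `F_q` (`n ≤ q-1`),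
and let `H0` be the `(d-1) × n` matrix with columns `(α_j, α_j², …, α_j^{d-1})ᵀ`. Form `H`
from `H0` by the block-indicator lengthening construction (blocks of size at most `r`, one
indicator row and one appended extra column per block). Then any `d` columns of `H` are
linearly independent. -/
theorem vandermonde_lengthened_cols_linearIndependent {q n m s r b d : ℕ}
    {F : Type*} [Field F] [Fintype F] (hcard : Fintype.card F = q)
    (hnq : n ≤ q - 1) (hd : 2 ≤ d) (hr : 1 ≤ r)
    (hn : n = m * r + s) (hs1 : 1 ≤ s) (hsr : s ≤ r)
    (hb : b = (n + r - 1) / r)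
    (α : Fin n → F) (hinj : Function.Injective α) (hne : ∀ j, α j ≠ 0) :
    ∀ T : Finset (Fin n ⊕ Fin b), T.card = d →
      ColsLinearIndependent
        (lengthenMatrix (fun (t : Fin (d - 1)) (j : Fin n) => α j ^ ((t : ℕ) + 1)) r b) T :=
  vandermonde_lengthened_cols_linearIndependent_general hr hb α hinj hne
end

section
/- Let r be a positive integer, n <= q-1 with n = mr + s, 1 <= s <= r, and let d be a positive integer with d <= s. Then there exists a q-ary linear locally repairable code with length N = n + ceil(n/r), dimension K = n - d + 1, minimum distance exactly d + 1, and locality r, which meets the Singleton-type bound d(C) = N - K - ceil(K/r) + 2 with equality. -/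
open Finset

/-!
Data sit on `n` coordinates split into `m + 1` groups of at most `r` consecutive ones, and each
group gets one parity coordinate. The checks are the power sums `∑ yᵢ αᵢᵏ`, `1 ≤ k ≤ d - 1`, of
the data `y` over distinct nonzero `αᵢ`, and, per group, that data plus parity sum to zero; the
group checks give locality `r`. A nonzero codeword has nonzero data. If some parity is nonzero,
`(yᵢ αᵢ)` is killed by `d - 1` consecutive power sums, so by Vandermonde `y` has weight `≥ d`; if
all parities vanish, `∑ yᵢ = 0` is one more power sum and `y` has weight `≥ d + 1`. As `d ≤ s ≤ r`,
the first group has `d` data coordinates carrying a nonzero kernel vector of the power sums,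
which with its parity is a codeword of weight `d + 1`. The same Vandermonde bound shows that a
codeword vanishing outside `d - 1` data coordinates is zero, so the dimension is `n - (d - 1)`;
finally `⌈n / r⌉ = ⌈(n - d + 1) / r⌉ = m + 1`.
-/

theorem lt_hammingNorm_of_sum_mul_pow_eq_zero {F ι : Type*} [Field F] [DecidableEq F] [Fintype ι]
    {α : ι → F} (hα : Function.Injective α) {v : ι → F} (hv : v ≠ 0) {e : ℕ}
    (h : ∀ k < e, ∑ i, v i * α i ^ k = 0) : e < hammingNorm v := by
  by_contra! hle
  set T := univ.filter (fun i => v i ≠ 0)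
  let σ : Fin #T ≃ T := T.equivFin.symm
  have hsum : ∀ k : Fin #T, ∑ j, v (σ j) * α (σ j) ^ (k : ℕ) = 0 := fun k => by
    rw [Equiv.sum_comp σ (fun i : T => v i * α i ^ (k : ℕ)),
      Finset.sum_coe_sort T (fun i => v i * α i ^ (k : ℕ)),
      Finset.sum_filter_of_ne fun i _ hi => left_ne_zero_of_mul hi]
    exact h k (k.2.trans_le hle)
  have hzero := Matrix.eq_zero_of_vecMul_eq_zero
    (Matrix.det_vandermonde_ne_zero_iff.mpr (hα.comp (Subtype.val_injective.comp σ.injective)))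
    (funext hsum)
  obtain ⟨i, hi⟩ := Function.ne_iff.mp hv
  have hiT : i ∈ T := Finset.mem_filter.mpr ⟨Finset.mem_univ i, hi⟩
  exact hi (by simpa using congrFun hzero (σ.symm ⟨i, hiT⟩))

theorem hammingNorm_eq_add_inl_inr {ι κ β : Type*} [Fintype ι] [Fintype κ] [Zero β]
    [DecidableEq β] (x : ι ⊕ κ → β) :
    hammingNorm x = hammingNorm (x ∘ Sum.inl) + hammingNorm (x ∘ Sum.inr) := by
  simp only [hammingNorm, Finset.card_filter, Fintype.sum_sum_type, Function.comp_apply]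

section Reindex

variable {F ι ι' : Type*} [Field F] (σ : ι ≃ ι')

theorem finrank_comap_funLeft (C : Submodule F (ι → F)) :
    Module.finrank F (C.comap (LinearMap.funLeft F F σ)) = Module.finrank F C := by
  rw [show LinearMap.funLeft F F σ = (LinearEquiv.funCongrLeft F F σ : (ι' → F) →ₗ[F] ι → F)
    from rfl, Submodule.comap_equiv_eq_map_symm, LinearEquiv.finrank_map_eq]

variable [Fintype ι] [Fintype ι']

theorem hammingNorm_comp_equiv {β : Type*} [Zero β] [DecidableEq β] (x : ι' → β) :
    hammingNorm (x ∘ σ) = hammingNorm x := by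
  simp only [hammingNorm, Finset.card_filter]
  exact Equiv.sum_comp σ fun i => if x i ≠ 0 then 1 else 0

theorem IsMinDist.comap_funLeft [DecidableEq F] {C : Submodule F (ι → F)} {d : ℕ}
    (h : IsMinDist C d) : IsMinDist (C.comap (LinearMap.funLeft F F σ)) d := by
  obtain ⟨⟨c, hc, hc0, hcd⟩, hdist⟩ := h
  refine ⟨⟨c ∘ σ.symm, by simpa [LinearMap.funLeft, Function.comp_assoc] using hc,
    fun h => hc0 ?_, by rw [← hcd, ← hammingNorm_comp_equiv σ.symm]⟩, fun x hx hx0 => ?_⟩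
  · simpa [Function.comp_assoc] using congrArg (· ∘ σ) h
  · rw [← hammingNorm_comp_equiv σ x]
    exact hdist _ hx fun h => hx0 (by simpa [Function.comp_assoc] using congrArg (· ∘ σ.symm) h)

theorem HasLocality.comap_funLeft {C : Submodule F (ι → F)} {r : ℕ} (h : HasLocality C r) :
    HasLocality (C.comap (LinearMap.funLeft F F σ)) r := by
  intro i'
  obtain ⟨R, hR, hiR, hrec⟩ := h (σ.symm i')
  refine ⟨R.map σ.toEmbedding, by simpa using hR, by simpa using hiR, fun u hu v hv huv => ?_⟩
  simpa using hrec _ hu _ hv fun j hj hji =>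
    huv (σ j) (Finset.mem_map_of_mem _ hj) fun h => hji (σ.symm_apply_eq.mpr h.symm).symm

end Reindex

theorem isRecoverySet_of_forall_sum_eq_zero_s9 {F ι : Type*} [Field F] [Fintype ι]
    {C : Submodule F (ι → F)} {i : ι} {R : Finset ι} (hi : i ∈ R)
    (h : ∀ x ∈ C, ∑ j ∈ R, x j = 0) : IsRecoverySet C i R := by
  refine ⟨hi, fun u hu v hv huv => ?_⟩
  have hsum := h (u - v) (C.sub_mem hu hv)
  rw [Finset.sum_eq_single_of_mem (f := u - v) i hi fun j hj hji => sub_eq_zero.2 (huv j hj hji)]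
    at hsum
  exact sub_eq_zero.1 hsum

section LengthenedRS

variable {F ι κ : Type*} [Field F] [Fintype ι] [DecidableEq κ]

def powerSums (α : ι → F) (e : ℕ) : (ι → F) →ₗ[F] (Fin e → F) where
  toFun y k := ∑ i, y i * α i ^ (k.val + 1)
  map_add' y z := by ext; simp [add_mul, Finset.sum_add_distrib]
  map_smul' c y := by ext; simp [Finset.mul_sum, mul_assoc]

def groupChecks (g : ι → κ) : (ι ⊕ κ → F) →ₗ[F] (κ → F) where
  toFun x b := ∑ i with g i = b, x (.inl i) + x (.inr b)
  map_add' x y := by ext; simp [Finset.sum_add_distrib]; ring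
  map_smul' c x := by ext; simp [Finset.mul_sum, mul_add]

def lengthenedRSCheck (α : ι → F) (g : ι → κ) (e : ℕ) :
    (ι ⊕ κ → F) →ₗ[F] (Fin e → F) × (κ → F) :=
  (powerSums α e ∘ₗ LinearMap.funLeft F F Sum.inl).prod (groupChecks g)

/-- Data coordinates `ι`, one parity coordinate per group `κ` (the group of `i` is `g i`): the
kernel of the lengthened Vandermonde parity-check matrix `[V 0; G I]`, where `V` has rows
`(αᵢ ^ k)ᵢ` for `1 ≤ k ≤ e` and `G` is the incidence matrix of the groups. -/
def lengthenedRSCode (α : ι → F) (g : ι → κ) (e : ℕ) : Submodule F (ι ⊕ κ → F) :=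
  LinearMap.ker (lengthenedRSCheck α g e)

variable {α : ι → F} {g : ι → κ} {e : ℕ}

theorem mem_lengthenedRSCode_iff {x : ι ⊕ κ → F} :
    x ∈ lengthenedRSCode α g e ↔
      powerSums α e (x ∘ Sum.inl) = 0 ∧ ∀ b, ∑ i with g i = b, x (.inl i) + x (.inr b) = 0 := by
  simp [lengthenedRSCode, lengthenedRSCheck, funext_iff, groupChecks, LinearMap.funLeft]

def withParities (g : ι → κ) (y : ι → F) : ι ⊕ κ → F :=
  Sum.elim y fun b => -∑ i with g i = b, y i

theorem withParities_mem {y : ι → F} (hy : powerSums α e y = 0) :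
    withParities g y ∈ lengthenedRSCode α g e :=
  mem_lengthenedRSCode_iff.mpr ⟨hy, fun b => by simp [withParities]⟩

theorem eq_zero_of_comp_inl_eq_zero {x : ι ⊕ κ → F} (hx : x ∈ lengthenedRSCode α g e)
    (h : x ∘ Sum.inl = 0) : x = 0 := by
  have hpar := (mem_lengthenedRSCode_iff.mp hx).2
  ext (i | b)
  · exact congrFun h i
  · simpa [show ∀ i, x (.inl i) = 0 from congrFun h] using hpar b

theorem sum_inl_eq_neg_sum_inr [Fintype κ] {x : ι ⊕ κ → F} (hx : x ∈ lengthenedRSCode α g e) :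
    ∑ i, x (.inl i) = -∑ b, x (.inr b) := by
  rw [eq_neg_iff_add_eq_zero, ← Finset.sum_fiberwise univ g, ← Finset.sum_add_distrib]
  exact Finset.sum_eq_zero fun b _ => (mem_lengthenedRSCode_iff.mp hx).2 b

theorem hasLocality_lengthenedRSCode [Fintype κ] {r : ℕ} (hg : ∀ b, #{i | g i = b} ≤ r) :
    HasLocality (lengthenedRSCode α g e) r := by
  have hgroup : ∀ c b, c ∈ (univ.filter (g · = b)).disjSum {b} →
      ∃ R : Finset (ι ⊕ κ), R.card ≤ r + 1 ∧ IsRecoverySet (lengthenedRSCode α g e) c R :=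
    fun c b hc => ⟨_, by simpa using hg b, isRecoverySet_of_forall_sum_eq_zero_s9 hc fun x hx => by
      rw [Finset.sum_disjSum, Finset.sum_singleton]
      exact (mem_lengthenedRSCode_iff.mp hx).2 b⟩
  rintro (i | b)
  · exact hgroup _ (g i) (by simp)
  · exact hgroup _ b (by simp)

variable [DecidableEq F]

theorem eq_zero_of_powerSums_eq_zero (hα : Function.Injective α) (hα0 : ∀ i, α i ≠ 0)
    {y : ι → F} (hy : powerSums α e y = 0) (hwt : hammingNorm y ≤ e) : y = 0 := by
  by_contra hy0
  have hyα : (fun i => y i * α i) ≠ 0 := fun h =>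
    hy0 (funext fun i => (mul_eq_zero.mp (congrFun h i)).resolve_right (hα0 i))
  have hlt : e < hammingNorm fun i => y i * α i :=
    lt_hammingNorm_of_sum_mul_pow_eq_zero hα hyα fun k hk => by
      simpa [powerSums, mul_assoc, pow_succ'] using congrFun hy ⟨k, hk⟩
  simp only [hammingNorm, ne_eq, mul_eq_zero, hα0, or_false] at hlt
  exact hwt.not_gt hlt

theorem eq_zero_of_hammingNorm_comp_inl_le (hα : Function.Injective α) (hα0 : ∀ i, α i ≠ 0)
    {x : ι ⊕ κ → F} (hx : x ∈ lengthenedRSCode α g e) (hwt : hammingNorm (x ∘ Sum.inl) ≤ e) :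
    x = 0 :=
  eq_zero_of_comp_inl_eq_zero hx <|
    eq_zero_of_powerSums_eq_zero hα hα0 (mem_lengthenedRSCode_iff.mp hx).1 hwt

theorem distAtLeast_lengthenedRSCode [Fintype κ] (hα : Function.Injective α)
    (hα0 : ∀ i, α i ≠ 0) : DistAtLeast (lengthenedRSCode α g e) (e + 2) := by
  intro x hx hx0
  have hdata : e < hammingNorm (x ∘ Sum.inl) := by
    by_contra! h
    exact hx0 (eq_zero_of_hammingNorm_comp_inl_le hα hα0 hx h)
  rw [hammingNorm_eq_add_inl_inr]
  by_cases hpar : x ∘ Sum.inr = 0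
  · -- then the data also sums to zero: one more vanishing power sum
    have hpow : ∀ k < e + 1, ∑ i, (x ∘ Sum.inl) i * α i ^ k = 0
      | 0, _ => by
        simpa [show ∀ b, x (.inr b) = 0 from congrFun hpar] using sum_inl_eq_neg_sum_inr hx
      | k + 1, hk => by
        simpa [powerSums] using congrFun (mem_lengthenedRSCode_iff.mp hx).1 ⟨k, by omega⟩
    have := lt_hammingNorm_of_sum_mul_pow_eq_zero hα (hammingNorm_pos_iff.mp (by omega)) hpow
    omega
  · have := hammingNorm_pos_iff.mpr hpar
    omega

theorem finrank_lengthenedRSCode [Fintype κ] (hα : Function.Injective α) (hα0 : ∀ i, α i ≠ 0)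
    (he : e ≤ Fintype.card ι) :
    Module.finrank F (lengthenedRSCode α g e) = Fintype.card ι - e := by
  classical
  apply le_antisymm
  · obtain ⟨S, -, hS⟩ := Finset.exists_subset_card_eq (s := (univ : Finset ι)) (by simpa using he)
    let ρ : lengthenedRSCode α g e →ₗ[F] ({i // i ∉ S} → F) :=
      LinearMap.funLeft F F (fun i : {i // i ∉ S} => Sum.inl i.val) ∘ₗ Submodule.subtype _
    have hρ : Function.Injective ρ := by
      rw [← LinearMap.ker_eq_bot, Submodule.eq_bot_iff]
      rintro ⟨x, hx⟩ hρx
      have hwt : hammingNorm (x ∘ Sum.inl) ≤ e := hS ▸ Finset.card_le_card fun i hi => by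
        by_contra hiS
        exact (Finset.mem_filter.1 hi).2 (congrFun (LinearMap.mem_ker.mp hρx) ⟨i, hiS⟩)
      exact Subtype.ext (eq_zero_of_hammingNorm_comp_inl_le hα hα0 hx hwt)
    have := LinearMap.finrank_le_finrank_of_injective hρ
    rwa [Module.finrank_fintype_fun_eq_card, Fintype.card_subtype_compl, Fintype.card_coe, hS]
      at this
  · have hrank := (lengthenedRSCheck α g e).finrank_range_add_finrank_ker
    have hrange := (LinearMap.range (lengthenedRSCheck α g e)).finrank_le
    simp only [Module.finrank_prod, Module.finrank_fintype_fun_eq_card, Fintype.card_fin,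
      Fintype.card_sum] at hrank hrange
    rw [lengthenedRSCode]
    omega

theorem exists_mem_lengthenedRSCode_hammingNorm_eq [Fintype κ] (hα : Function.Injective α)
    (hα0 : ∀ i, α i ≠ 0) {b : κ} (hb : e + 1 ≤ #{i | g i = b}) :
    ∃ x ∈ lengthenedRSCode α g e, x ≠ 0 ∧ hammingNorm x = e + 2 := by
  obtain ⟨S, hSb, hS⟩ := Finset.exists_subset_card_eq hb
  let extend := Function.ExtendByZero.linearMap F (Subtype.val : S → ι)
  obtain ⟨v, hv, hv0⟩ := Submodule.exists_mem_ne_zero_of_ne_bot <|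
    LinearMap.ker_ne_bot_of_finrank_lt (f := powerSums α e ∘ₗ extend) (by simp [hS])
  set y := extend v
  have hyS : ∀ i ∉ S, y i = 0 := fun i hi =>
    Function.extend_apply' _ _ _ fun ⟨a, ha⟩ => hi (ha ▸ a.2)
  have hy0 : y ≠ 0 := fun h => hv0 <| funext fun a => by
    simpa [y, extend, Subtype.val_injective.extend_apply] using congrFun h a
  have hx := withParities_mem (g := g) hv
  refine ⟨withParities g y, hx, fun h => hy0 (congrArg (· ∘ Sum.inl) h),
    le_antisymm ?_ (distAtLeast_lengthenedRSCode hα hα0 _ hx fun h => hy0 ?_)⟩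
  · have hdata : hammingNorm (withParities g y ∘ Sum.inl) ≤ e + 1 :=
      hS ▸ Finset.card_le_card fun i hi => by
        by_contra hiS
        exact (Finset.mem_filter.1 hi).2 (hyS i hiS)
    have hpar : hammingNorm (withParities g y ∘ Sum.inr) ≤ 1 := by
      refine (Finset.card_le_card (t := {b}) fun b' hb' => ?_).trans (Finset.card_singleton b).le
      by_contra hne
      refine (Finset.mem_filter.1 hb').2 (neg_eq_zero.2 (Finset.sum_eq_zero fun i hi => ?_))
      refine hyS i fun hiS => hne ?_
      rw [Finset.mem_singleton, ← (Finset.mem_filter.1 hi).2, (Finset.mem_filter.1 (hSb hiS)).2]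
    rw [hammingNorm_eq_add_inl_inr]
    omega
  · exact congrArg (· ∘ Sum.inl) h

theorem isMinDist_lengthenedRSCode [Fintype κ] (hα : Function.Injective α)
    (hα0 : ∀ i, α i ≠ 0) {b : κ} (hb : e + 1 ≤ #{i | g i = b}) :
    IsMinDist (lengthenedRSCode α g e) (e + 2) :=
  ⟨exists_mem_lengthenedRSCode_hammingNorm_eq hα hα0 hb, distAtLeast_lengthenedRSCode hα hα0⟩

end LengthenedRS

theorem Nat.mul_add_add_sub_one_div_eq_succ {m r s : ℕ} (hs : 1 ≤ s) (hsr : s ≤ r) :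
    (m * r + s + r - 1) / r = m + 1 :=
  Nat.div_eq_of_lt_le (by rw [add_mul]; omega) (by rw [add_mul, add_mul]; omega)

theorem Fin.card_filter_div_eq_le {n r : ℕ} (hr : 0 < r) (b : ℕ) :
    #{j : Fin n | (j : ℕ) / r = b} ≤ r :=
  calc #{j : Fin n | (j : ℕ) / r = b}
      ≤ #(Finset.Ico (b * r) (b * r + r)) :=
        Finset.card_le_card_of_injOn (↑) (fun j hj => by
          obtain rfl := (Finset.mem_filter.1 hj).2
          simpa using ⟨Nat.div_mul_le_self j r, Nat.lt_div_mul_add hr⟩) Fin.val_injective.injOn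
    _ = r := by simp

theorem singleton_optimal_lengthened_RS_general {q n m s r d : ℕ}
    {F : Type*} [Field F] [Fintype F] [DecidableEq F] (hcard : Fintype.card F = q)
    (hnq : n ≤ q - 1) (hn : n = m * r + s) (hs1 : 1 ≤ s) (hsr : s ≤ r)
    (hd1 : 1 ≤ d) (hds : d ≤ s) :
    ∃ C : Submodule F (Fin (n + (n + r - 1) / r) → F),
      Module.finrank F C = n + 1 - d ∧
      IsMinDist C (d + 1) ∧
      HasLocality C r ∧
      d + 1 = (n + (n + r - 1) / r) - (n + 1 - d) - ((n + 1 - d) + r - 1) / r + 2 := by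
  obtain ⟨α, hα, hα0⟩ : ∃ α : Fin n → F, Function.Injective α ∧ ∀ j, α j ≠ 0 := by
    obtain ⟨f⟩ := Function.Embedding.nonempty_of_card_le
      (by simpa [Fintype.card_units, hcard] : Fintype.card (Fin n) ≤ Fintype.card Fˣ)
    exact ⟨fun j => f j, fun i j h => f.injective (Units.ext h), fun j => (f j).ne_zero⟩
  have hceil : (n + r - 1) / r = m + 1 := hn ▸ Nat.mul_add_add_sub_one_div_eq_succ hs1 hsr
  have hceil' : (n + 1 - d + r - 1) / r = m + 1 := by
    rw [show n + 1 - d = m * r + (s + 1 - d) by omega]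
    exact Nat.mul_add_add_sub_one_div_eq_succ (by omega) (by omega)
  let g : Fin n → Fin (m + 1) := fun j => ⟨j / r, Nat.div_lt_of_lt_mul (by
    have := j.2; rw [mul_add, mul_one, mul_comm]; omega)⟩
  have hfiber : ∀ b, #{j | g j = b} = #{j : Fin n | (j : ℕ) / r = b} := fun b => by
    simp [g, Fin.ext_iff]
  let σ : Fin n ⊕ Fin (m + 1) ≃ Fin (n + (n + r - 1) / r) :=
    finSumFinEquiv.trans (finCongr (by rw [hceil]))
  refine ⟨(lengthenedRSCode α g (d - 1)).comap (LinearMap.funLeft F F σ), ?_, ?_,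
    (hasLocality_lengthenedRSCode fun b => ?_).comap_funLeft σ, by omega⟩
  · rw [finrank_comap_funLeft, finrank_lengthenedRSCode hα hα0 (by rw [Fintype.card_fin]; omega)]
    rw [Fintype.card_fin]
    omega
  · have hb : d - 1 + 1 ≤ #{j | g j = 0} := by
      rw [hfiber]
      calc d - 1 + 1 = #(univ : Finset (Fin d)) := by rw [card_univ, Fintype.card_fin]; omega
        _ ≤ _ := Finset.card_le_card_of_injOn (Fin.castLE (by omega))
          (fun j _ => by simpa using Nat.div_eq_of_lt (by omega))
          (Fin.castLE_injective _).injOn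
    simpa [show d - 1 + 2 = d + 1 by omega] using
      (isMinDist_lengthenedRSCode hα hα0 hb).comap_funLeft σ
  · rw [hfiber]
    exact Fin.card_filter_div_eq_le (by omega) b

/-- for `r ≥ 1`, `n ≤ q-1` with `n = mr + s`, `1 ≤ s ≤ r`, and `1 ≤ d ≤ s`,
there exists a `q`-ary linear locally repairable code of length `N = n + ⌈n/r⌉`, dimension
`K = n - d + 1`, minimum distance exactly `d + 1` and locality `r`, meeting the
Singleton-type bound `d(C) = N - K - ⌈K/r⌉ + 2` with equality. -/
theorem singleton_optimal_lengthened_RS {q n m s r d : ℕ}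
    {F : Type*} [Field F] [Fintype F] [DecidableEq F] (hcard : Fintype.card F = q)
    (hr : 1 ≤ r) (hnq : n ≤ q - 1) (hn : n = m * r + s) (hs1 : 1 ≤ s) (hsr : s ≤ r)
    (hd1 : 1 ≤ d) (hds : d ≤ s) :
    ∃ C : Submodule F (Fin (n + (n + r - 1) / r) → F),
      Module.finrank F C = n + 1 - d ∧
      IsMinDist C (d + 1) ∧
      HasLocality C r ∧
      d + 1 = (n + (n + r - 1) / r) - (n + 1 - d) - ((n + 1 - d) + r - 1) / r + 2 :=
  singleton_optimal_lengthened_RS_general hcard hnq hn hs1 hsr hd1 hds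
end

section
/- There is no binary linear locally repairable code with parameters [5, 4, 1] and locality 4; more generally, no linear code of positive dimension and minimum distance 1 over F_2 of length 5 has locality 4 while a [5,4,2] code with locality 4 exists. In particular, the propagation rule 'an [n,k,d;r] LRC yields an [n,k,d-1;r] LRC' fails for locally repairable codes. -/
/-!
A codeword of weight one, supported at `i`, agrees with `0` at every other coordinate, so no
set of other coordinates determines coordinate `i`: a code of minimum distance 1 has no finite
locality at all. The single parity-check code recovers each coordinate as minus the sum of all
the others, has dimension `n - 1`, and its nonzero words have weight at least 2.
-/

open Finset

lemma exists_support_eq_singleton_of_hammingNorm_eq_one {ι : Type*} [Fintype ι]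
    {β : ι → Type*} [∀ i, Zero (β i)] [∀ i, DecidableEq (β i)] {c : ∀ i, β i}
    (hc : hammingNorm c = 1) : ∃ i, c i ≠ 0 ∧ ∀ j, j ≠ i → c j = 0 := by
  obtain ⟨i, hi⟩ := card_eq_one.mp hc
  have hsupp : ∀ j, c j ≠ 0 ↔ j = i := fun j => by
    simpa using congrArg (j ∈ ·) hi
  exact ⟨i, (hsupp i).2 rfl, fun j hj => not_not.mp (mt (hsupp j).1 hj)⟩

section Locality

variable {F : Type*} [Field F] {ι : Type*} [Fintype ι] {C : Submodule F (ι → F)}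

lemma not_isRecoverySet_of_support_eq_singleton {c : ι → F} (hc : c ∈ C) {i : ι}
    (hci : c i ≠ 0) (hcj : ∀ j, j ≠ i → c j = 0) (R : Finset ι) : ¬ IsRecoverySet C i R :=
  fun ⟨_, hrec⟩ => hci (hrec c hc 0 C.zero_mem fun j _ hj => hcj j hj)

lemma HasLocality.hammingNorm_ne_one [DecidableEq F] {r : ℕ} (hC : HasLocality C r)
    {c : ι → F} (hc : c ∈ C) : hammingNorm c ≠ 1 := fun hw => by
  obtain ⟨i, hci, hcj⟩ := exists_support_eq_singleton_of_hammingNorm_eq_one hw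
  obtain ⟨R, -, hR⟩ := hC i
  exact not_isRecoverySet_of_support_eq_singleton hc hci hcj R hR

end Locality

section ParityCode

variable (F : Type*) [Field F] (ι : Type*) [Fintype ι]

def parityCheck : (ι → F) →ₗ[F] F := ∑ i, LinearMap.proj i

def parityCode : Submodule F (ι → F) := LinearMap.ker (parityCheck F ι)

variable {F ι}

@[simp]
lemma parityCheck_apply (x : ι → F) : parityCheck F ι x = ∑ i, x i := by
  simp [parityCheck]

lemma mem_parityCode {x : ι → F} : x ∈ parityCode F ι ↔ ∑ i, x i = 0 := by
  simp [parityCode]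

lemma parityCheck_surjective [Nonempty ι] : Function.Surjective (parityCheck F ι) := by
  classical
  intro a
  refine ⟨Pi.single (Classical.arbitrary ι) a, ?_⟩
  simp

lemma finrank_parityCode [Nonempty ι] :
    Module.finrank F (parityCode F ι) = Fintype.card ι - 1 := by
  have h := LinearMap.finrank_range_add_finrank_ker (parityCheck F ι)
  rw [LinearMap.range_eq_top.mpr parityCheck_surjective, finrank_top, Module.finrank_self,
    Module.finrank_fintype_fun_eq_card] at h
  rw [parityCode]
  omega

lemma eq_neg_sum_erase_of_mem_parityCode [DecidableEq ι] {x : ι → F} (hx : x ∈ parityCode F ι)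
    (i : ι) : x i = -∑ j ∈ univ.erase i, x j := by
  rw [eq_neg_iff_add_eq_zero, add_sum_erase _ _ (mem_univ i), ← mem_parityCode.mp hx]

lemma isRecoverySet_parityCode_univ (i : ι) : IsRecoverySet (parityCode F ι) i univ := by
  classical
  refine ⟨mem_univ i, fun u hu v hv huv => ?_⟩
  rw [eq_neg_sum_erase_of_mem_parityCode hu, eq_neg_sum_erase_of_mem_parityCode hv]
  exact congrArg _ (sum_congr rfl fun j hj => huv j (mem_univ j) (ne_of_mem_erase hj))

lemma hasLocality_parityCode : HasLocality (parityCode F ι) (Fintype.card ι - 1) :=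
  fun i => ⟨univ, by rw [card_univ]; omega, isRecoverySet_parityCode_univ i⟩

lemma distAtLeast_two_parityCode [DecidableEq F] : DistAtLeast (parityCode F ι) 2 := by
  classical
  intro x hx hx0
  by_contra! hlt
  obtain ⟨i, hxi, hxj⟩ := exists_support_eq_singleton_of_hammingNorm_eq_one
    (show hammingNorm x = 1 by have := hammingNorm_pos_iff.mpr hx0; omega)
  rw [eq_neg_sum_erase_of_mem_parityCode hx i,
    sum_eq_zero fun j hj => hxj j (ne_of_mem_erase hj), neg_zero] at hxi
  exact hxi rfl

lemma hammingNorm_single_sub_single [DecidableEq ι] [DecidableEq F] {i j : ι} (hij : i ≠ j) :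
    hammingNorm (Pi.single i 1 - Pi.single j 1 : ι → F) = 2 := by
  have : filter (fun k => (Pi.single i 1 - Pi.single j 1 : ι → F) k ≠ 0) univ = {i, j} := by
    ext k
    by_cases hki : k = i <;> by_cases hkj : k = j <;> simp_all [Pi.single_apply]
  rw [hammingNorm, this, card_pair hij]

lemma isMinDist_two_parityCode [DecidableEq F] [Nontrivial ι] :
    IsMinDist (parityCode F ι) 2 := by
  classical
  obtain ⟨i, j, hij⟩ := exists_pair_ne ι
  refine ⟨⟨Pi.single i 1 - Pi.single j 1, ?_, ?_, hammingNorm_single_sub_single hij⟩,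
    distAtLeast_two_parityCode⟩
  · simp [mem_parityCode, Finset.sum_sub_distrib]
  · rw [Ne, sub_eq_zero]
    intro h
    simpa [hij] using congrFun h i

end ParityCode

/-- no binary linear code of length 5 with positive dimension and minimum
distance 1 has locality 4, while a binary `[5,4,2]` code with locality 4 exists; hence the
propagation rule "an `[n,k,d;r]` LRC yields an `[n,k,d-1;r]` LRC" fails for LRCs. -/
theorem no_binary_5_4_1_LRC :
    (¬ ∃ C : Submodule (ZMod 2) (Fin 5 → ZMod 2),
        0 < Module.finrank (ZMod 2) C ∧ IsMinDist C 1 ∧ HasLocality C 4) ∧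
    (∃ C : Submodule (ZMod 2) (Fin 5 → ZMod 2),
        Module.finrank (ZMod 2) C = 4 ∧ IsMinDist C 2 ∧ HasLocality C 4) := by
  refine ⟨?_, parityCode (ZMod 2) (Fin 5), ?_, isMinDist_two_parityCode, ?_⟩
  · rintro ⟨C, -, ⟨⟨c, hc, -, hw⟩, -⟩, hloc⟩
    exact hloc.hammingNorm_ne_one hc hw
  · simp [finrank_parityCode]
  · simpa using hasLocality_parityCode (F := ZMod 2) (ι := Fin 5)
end
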